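/- arXiv:1205.0478 — 6 statements merged into one kernel-verified Lean document; each statement's English description precedes it below -/
import Mathlib

section
/- Let $S=K[x_1,\dots,x_n,y_1,\dots,y_m]$ and let $I_q J_r$ be the product of the ideal generated by all squarefree monomials of degree $q$ in the $x$-variables with the ideal generated by all squarefree monomials of degree $r$ in the $y$-variables, where $1\le q\le n$ and $1\le r\le m$. Then the Alexander dual of $I_q J_r$ equals $I_{n-q+1} + J_{m-r+1}$. -/
open MvPolynomial

/-- The squarefree Veronese ideal of degree `q` in the `x`-variables of
`K[x_1,…,x_n,y_1,…,y_m]`: it is generated by all squarefree monomials of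
degree `q` in `x_1,…,x_n`. -/
noncomputable def mixedI (n m : ℕ) (K : Type*) [Field K] (q : ℕ) :
    Ideal (MvPolynomial (Fin n ⊕ Fin m) K) :=
  Ideal.span {p | ∃ A : Finset (Fin n), A.card = q ∧ p = ∏ i ∈ A, X (Sum.inl i)}

/-- The squarefree Veronese ideal of degree `r` in the `y`-variables. -/
noncomputable def mixedJ (n m : ℕ) (K : Type*) [Field K] (r : ℕ) :
    Ideal (MvPolynomial (Fin n ⊕ Fin m) K) :=
  Ideal.span {p | ∃ B : Finset (Fin m), B.card = r ∧ p = ∏ j ∈ B, X (Sum.inr j)}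

/-- The Alexander dual of a squarefree monomial ideal `I` in
`K[x_i : i ∈ σ]`: it is generated by the squarefree monomials `∏_{i ∈ S} x_i`
such that the complementary squarefree monomial `∏_{i ∉ S} x_i` does not lie
in `I`.  For a squarefree monomial ideal `I = I_Δ` this coincides with the
classical Alexander dual `⋂ 𝔪_α` over the minimal generators `x^α` of `I`. -/
noncomputable def alexDual {σ : Type*} [Fintype σ] [DecidableEq σ] {K : Type*} [Field K]
    (I : Ideal (MvPolynomial σ K)) : Ideal (MvPolynomial σ K) :=
  Ideal.span {p | ∃ S : Finset σ, (∏ i ∈ Sᶜ, (X i : MvPolynomial σ K)) ∉ I ∧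
    p = ∏ i ∈ S, X i}

/-!
A squarefree monomial `∏_{i ∈ T} x_i` lies in the ideal generated by the squarefree monomials
`∏_{i ∈ S} x_i`, `S ∈ 𝒢`, iff `T` contains some `S ∈ 𝒢`; so such an ideal only depends on the
upper closure of `𝒢`. For `I_q J_r` this upper closure consists of the sets with at least `q`
`x`-variables and at least `r` `y`-variables. Hence `∏_{i ∉ S} x_i ∉ I_q J_r` iff `S` contains
more than `n - q` of the `x`-variables or more than `m - r` of the `y`-variables, and this is
the upper closure of the generating family of `I_{n-q+1} + J_{m-r+1}`.
-/
open Finset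

theorem Finsupp.sum_single_one_le_iff {σ : Type*} {S T : Finset σ} :
    ∑ i ∈ S, single i 1 ≤ ∑ i ∈ T, single i 1 ↔ S ⊆ T := by
  classical
  rw [← orderIsoMultiset.le_iff_le, coe_orderIsoMultiset, toMultiset_sum_single,
    toMultiset_sum_single, one_nsmul, one_nsmul, Finset.val_le_iff]

namespace Finset

variable {α β : Type*}

theorem toLeft_compl [Fintype α] [Fintype β] [DecidableEq α] [DecidableEq β]
    (u : Finset (α ⊕ β)) : uᶜ.toLeft = u.toLeftᶜ := by
  ext; simp

theorem toRight_compl [Fintype α] [Fintype β] [DecidableEq α] [DecidableEq β]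
    (u : Finset (α ⊕ β)) : uᶜ.toRight = u.toRightᶜ := by
  ext; simp

theorem mem_upperClosure_map_inl_card_eq_iff {k : ℕ} {u : Finset (α ⊕ β)} :
    u ∈ upperClosure (map .inl '' {A : Finset α | #A = k}) ↔ k ≤ #u.toLeft := by
  simp [mem_upperClosure, map_inl_subset_iff_subset_toLeft, le_card_iff_exists_subset_card,
    and_comm]

theorem mem_upperClosure_map_inr_card_eq_iff {k : ℕ} {u : Finset (α ⊕ β)} :
    u ∈ upperClosure (map .inr '' {B : Finset β | #B = k}) ↔ k ≤ #u.toRight := by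
  simp [mem_upperClosure, map_inr_subset_iff_subset_toRight, le_card_iff_exists_subset_card,
    and_comm]

theorem mem_upperClosure_disjSum_card_eq_iff {k l : ℕ} {u : Finset (α ⊕ β)} :
    u ∈ upperClosure (Set.image2 disjSum {A : Finset α | #A = k} {B : Finset β | #B = l}) ↔
      k ≤ #u.toLeft ∧ l ≤ #u.toRight := by
  simp only [mem_upperClosure, Set.mem_image2, Set.mem_ofPred_eq,
    exists_exists_and_exists_and_eq_and, disjSum_subset, le_card_iff_exists_subset_card]
  exact ⟨fun ⟨A, hA, B, hB, hAu, hBu⟩ => ⟨⟨A, hAu, hA⟩, B, hBu, hB⟩,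
    fun ⟨⟨A, hAu, hA⟩, B, hBu, hB⟩ => ⟨A, hA, B, hB, hAu, hBu⟩⟩

end Finset

namespace MvPolynomial

variable {σ R : Type*} [CommSemiring R]

theorem prod_X_eq_monomial (S : Finset σ) :
    ∏ i ∈ S, (X i : MvPolynomial σ R) = monomial (∑ i ∈ S, Finsupp.single i 1) 1 :=
  (monomial_sum_one S _).symm

variable (R) in
noncomputable def squarefreeMonomialIdeal (𝒢 : Set (Finset σ)) : Ideal (MvPolynomial σ R) :=
  Ideal.span ((fun S => ∏ i ∈ S, X i) '' 𝒢)

theorem prod_X_mem_squarefreeMonomialIdeal_iff [Nontrivial R] {𝒢 : Set (Finset σ)}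
    {T : Finset σ} :
    ∏ i ∈ T, X i ∈ squarefreeMonomialIdeal R 𝒢 ↔ T ∈ upperClosure 𝒢 := by
  have hgen : (fun S => ∏ i ∈ S, (X i : MvPolynomial σ R)) '' 𝒢 =
      (fun s => monomial s 1) '' ((fun S => ∑ i ∈ S, Finsupp.single i 1) '' 𝒢) := by
    rw [Set.image_image]
    simp_rw [prod_X_eq_monomial]
  classical
  rw [squarefreeMonomialIdeal, hgen, prod_X_eq_monomial, mem_ideal_span_monomial_image,
    support_monomial, if_neg one_ne_zero]
  simp [Finsupp.sum_single_one_le_iff, mem_upperClosure]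

theorem squarefreeMonomialIdeal_upperClosure [Nontrivial R] (𝒢 : Set (Finset σ)) :
    squarefreeMonomialIdeal R (upperClosure 𝒢) = squarefreeMonomialIdeal R 𝒢 := by
  refine le_antisymm ?_ (Ideal.span_mono (Set.image_mono subset_upperClosure))
  rw [squarefreeMonomialIdeal, Ideal.span_le]
  rintro _ ⟨T, hT, rfl⟩
  exact prod_X_mem_squarefreeMonomialIdeal_iff.2 hT

theorem squarefreeMonomialIdeal_union (𝒢₁ 𝒢₂ : Set (Finset σ)) :
    squarefreeMonomialIdeal R (𝒢₁ ∪ 𝒢₂) =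
      squarefreeMonomialIdeal R 𝒢₁ ⊔ squarefreeMonomialIdeal R 𝒢₂ := by
  rw [squarefreeMonomialIdeal, Set.image_union, Ideal.span_union]; rfl

theorem alexDual_eq_squarefreeMonomialIdeal [Fintype σ] [DecidableEq σ] {K : Type*} [Field K]
    (I : Ideal (MvPolynomial σ K)) :
    alexDual I = squarefreeMonomialIdeal K {S | ∏ i ∈ Sᶜ, X i ∉ I} := by
  simp only [alexDual, squarefreeMonomialIdeal, Set.image, eq_comm]; rfl

theorem squarefreeMonomialIdeal_map_inl_mul_map_inr {α β : Type*}
    (𝒜 : Set (Finset α)) (ℬ : Set (Finset β)) :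
    squarefreeMonomialIdeal R (Finset.map .inl '' 𝒜) *
        squarefreeMonomialIdeal R (Finset.map .inr '' ℬ) =
      squarefreeMonomialIdeal R (Set.image2 disjSum 𝒜 ℬ) := by
  rw [squarefreeMonomialIdeal, squarefreeMonomialIdeal, Ideal.span_mul_span',
    squarefreeMonomialIdeal, ← Set.image2_mul, Set.image_image, Set.image_image,
    Set.image2_image_left, Set.image2_image_right, Set.image_image2]
  simp [prod_map, prod_disjSum]

end MvPolynomial

section Mixed

variable {n m : ℕ} {K : Type*} [Field K]

theorem mixedI_eq_squarefreeMonomialIdeal (q : ℕ) :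
    mixedI n m K q = squarefreeMonomialIdeal K (Finset.map .inl '' {A | #A = q}) := by
  rw [mixedI, squarefreeMonomialIdeal, Set.image_image]
  simp [Set.image, prod_map, eq_comm]

theorem mixedJ_eq_squarefreeMonomialIdeal (r : ℕ) :
    mixedJ n m K r = squarefreeMonomialIdeal K (Finset.map .inr '' {B | #B = r}) := by
  rw [mixedJ, squarefreeMonomialIdeal, Set.image_image]
  simp [Set.image, prod_map, eq_comm]

end Mixed

theorem alexDual_mixed_product_general (n m : ℕ) (K : Type*) [Field K] (q r : ℕ)
    (hqn : q ≤ n) (hrm : r ≤ m) :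
    alexDual (mixedI n m K q * mixedJ n m K r) =
      mixedI n m K (n - q + 1) + mixedJ n m K (m - r + 1) := by
  simp only [mixedI_eq_squarefreeMonomialIdeal, mixedJ_eq_squarefreeMonomialIdeal,
    squarefreeMonomialIdeal_map_inl_mul_map_inr, alexDual_eq_squarefreeMonomialIdeal,
    Submodule.add_eq_sup, ← squarefreeMonomialIdeal_union,
    ← squarefreeMonomialIdeal_upperClosure (_ ∪ _)]
  congr 1
  ext S
  have hSx : #S.toLeft ≤ n := (card_le_univ _).trans_eq (Fintype.card_fin n)
  have hSy : #S.toRight ≤ m := (card_le_univ _).trans_eq (Fintype.card_fin m)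
  simp only [Set.mem_ofPred_eq, prod_X_mem_squarefreeMonomialIdeal_iff,
    mem_upperClosure_disjSum_card_eq_iff, upperClosure_union, SetLike.mem_coe,
    UpperSet.mem_inf_iff, mem_upperClosure_map_inl_card_eq_iff,
    mem_upperClosure_map_inr_card_eq_iff, toLeft_compl, toRight_compl, card_compl,
    Fintype.card_fin]
  omega

/-- The Alexander dual of `I_q J_r` is `I_{n-q+1} + J_{m-r+1}`. -/
theorem alexDual_mixed_product (n m : ℕ) (K : Type*) [Field K] (q r : ℕ)
    (hq1 : 1 ≤ q) (hqn : q ≤ n) (hr1 : 1 ≤ r) (hrm : r ≤ m) :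
    alexDual (mixedI n m K q * mixedJ n m K r) =
      mixedI n m K (n - q + 1) + mixedJ n m K (m - r + 1) :=
  alexDual_mixed_product_general n m K q r hqn hrm
end

section
/- Let $\Delta$ be the simplicial complex on vertex set $\{x_1,\dots,x_n,y_1,\dots,y_m\}$ whose Stanley–Reisner ideal is the mixed product ideal $\sum_{i=1}^s I_{q_i}J_{r_i}$ (with $0\le q_1<\dots<q_s\le n$, $0\le r_s<\dots<r_1\le m$), and let $\bar q=(q(1),\dots,q(s'))$, $\bar r=(r(1),\dots,r(s'))$ be the associated vectors. Then the set of facets of $\Delta$ is the disjoint union, over $k=1,\dots,s'$, of the families $\mathcal{F}_k(\Delta)$ consisting of all subsets with exactly $q(k)$ of the $x$-vertices and exactly $r(k)$ of the $y$-vertices. -/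
/-- Number of `x`-vertices of a subset of `{x_1,…,x_n} ∪ {y_1,…,y_m}`. -/
def xcard {n m : ℕ} (F : Finset (Fin n ⊕ Fin m)) : ℕ :=
  (F.filter fun v => v.isLeft).card

/-- Number of `y`-vertices of a subset of `{x_1,…,x_n} ∪ {y_1,…,y_m}`. -/
def ycard {n m : ℕ} (F : Finset (Fin n ⊕ Fin m)) : ℕ :=
  (F.filter fun v => v.isRight).card

/-- `F` is a face of the Stanley–Reisner complex of the mixed product ideal
`∑_{i=1}^s I_{q_i} J_{r_i}`: the corresponding squarefree monomial lies in no
summand, i.e. for each `i` either fewer than `q_i` `x`-vertices or fewer than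
`r_i` `y`-vertices occur in `F`. -/
def IsFace (n m s : ℕ) (q r : ℕ → ℕ) (F : Finset (Fin n ⊕ Fin m)) : Prop :=
  ∀ i, 1 ≤ i → i ≤ s → xcard F < q i ∨ ycard F < r i

/-- `F` is a facet: a maximal face. -/
def IsFacet (n m s : ℕ) (q r : ℕ → ℕ) (F : Finset (Fin n ⊕ Fin m)) : Prop :=
  IsFace n m s q r F ∧ ∀ G, IsFace n m s q r G → F ⊆ G → F = G

section Helpers

variable {n m : ℕ}

lemma MPaux.xcard_le (F : Finset (Fin n ⊕ Fin m)) : xcard F ≤ n := by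
  classical
  unfold xcard
  have h : F.filter (fun v => v.isLeft) ⊆
      Finset.univ.map ⟨Sum.inl, Sum.inl_injective⟩ := by
    intro v hv
    have hl := (Finset.mem_filter.1 hv).2
    rcases v with x | y
    · simp
    · simp at hl
  have := Finset.card_le_card h
  simpa using this

lemma MPaux.ycard_le (F : Finset (Fin n ⊕ Fin m)) : ycard F ≤ m := by
  classical
  unfold ycard
  have h : F.filter (fun v => v.isRight) ⊆
      Finset.univ.map ⟨Sum.inr, Sum.inr_injective⟩ := by
    intro v hv
    have hl := (Finset.mem_filter.1 hv).2
    rcases v with x | y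
    · simp at hl
    · simp
  have := Finset.card_le_card h
  simpa using this

lemma MPaux.xcard_mono {F G : Finset (Fin n ⊕ Fin m)} (h : F ⊆ G) : xcard F ≤ xcard G :=
  Finset.card_le_card (Finset.filter_subset_filter _ h)

lemma MPaux.ycard_mono {F G : Finset (Fin n ⊕ Fin m)} (h : F ⊆ G) : ycard F ≤ ycard G :=
  Finset.card_le_card (Finset.filter_subset_filter _ h)

lemma MPaux.xcard_insert_left {F : Finset (Fin n ⊕ Fin m)} (x : Fin n)
    (hx : Sum.inl x ∉ F) :
    xcard (insert (Sum.inl x) F) = xcard F + 1 ∧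
      ycard (insert (Sum.inl x) F) = ycard F := by
  classical
  constructor
  · unfold xcard
    rw [Finset.filter_insert]
    simp only [Sum.isLeft_inl, if_true]
    exact Finset.card_insert_of_notMem fun h => hx (Finset.mem_filter.1 h).1
  · unfold ycard
    rw [Finset.filter_insert]
    simp

lemma MPaux.ycard_insert_right {F : Finset (Fin n ⊕ Fin m)} (y : Fin m)
    (hy : Sum.inr y ∉ F) :
    xcard (insert (Sum.inr y) F) = xcard F ∧
      ycard (insert (Sum.inr y) F) = ycard F + 1 := by
  classical
  constructor
  · unfold xcard
    rw [Finset.filter_insert]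
    simp
  · unfold ycard
    rw [Finset.filter_insert]
    simp only [Sum.isRight_inr, if_true]
    exact Finset.card_insert_of_notMem fun h => hy (Finset.mem_filter.1 h).1

lemma MPaux.exists_left_notMem {F : Finset (Fin n ⊕ Fin m)} (h : xcard F < n) :
    ∃ x : Fin n, Sum.inl x ∉ F := by
  classical
  by_contra hc
  push_neg at hc
  have h2 : (Finset.univ.map ⟨Sum.inl, Sum.inl_injective⟩ : Finset (Fin n ⊕ Fin m)) ⊆
      F.filter (fun v => v.isLeft) := by
    intro v hv
    rcases Finset.mem_map.1 hv with ⟨x, -, rfl⟩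
    exact Finset.mem_filter.2 ⟨hc x, rfl⟩
  have h3 := Finset.card_le_card h2
  unfold xcard at h
  simp at h3
  omega

lemma MPaux.exists_right_notMem {F : Finset (Fin n ⊕ Fin m)} (h : ycard F < m) :
    ∃ y : Fin m, Sum.inr y ∉ F := by
  classical
  by_contra hc
  push_neg at hc
  have h2 : (Finset.univ.map ⟨Sum.inr, Sum.inr_injective⟩ : Finset (Fin n ⊕ Fin m)) ⊆
      F.filter (fun v => v.isRight) := by
    intro v hv
    rcases Finset.mem_map.1 hv with ⟨y, -, rfl⟩
    exact Finset.mem_filter.2 ⟨hc y, rfl⟩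
  have h3 := Finset.card_le_card h2
  unfold ycard at h
  simp at h3
  omega

/-- Numeric characterization of facets. -/
lemma MPaux.facet_iff_num (s : ℕ) (q r : ℕ → ℕ) (F : Finset (Fin n ⊕ Fin m)) :
    IsFacet n m s q r F ↔
      ((∀ i, 1 ≤ i → i ≤ s → xcard F < q i ∨ ycard F < r i) ∧
       (xcard F = n ∨ ¬ ∀ i, 1 ≤ i → i ≤ s → xcard F + 1 < q i ∨ ycard F < r i) ∧
       (ycard F = m ∨ ¬ ∀ i, 1 ≤ i → i ≤ s → xcard F < q i ∨ ycard F + 1 < r i)) := by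
  classical
  constructor
  · rintro ⟨hface, hmax⟩
    refine ⟨hface, ?_, ?_⟩
    · by_cases hn : xcard F = n
      · exact Or.inl hn
      right
      intro hcon
      have hlt : xcard F < n := lt_of_le_of_ne (MPaux.xcard_le F) hn
      obtain ⟨x, hx⟩ := MPaux.exists_left_notMem hlt
      obtain ⟨hx1, hx2⟩ := MPaux.xcard_insert_left x hx
      have hfaceG : IsFace n m s q r (insert (Sum.inl x) F) := by
        intro i h1 h2
        rw [hx1, hx2]
        exact hcon i h1 h2
      have := hmax _ hfaceG (Finset.subset_insert _ _)
      exact hx (this ▸ Finset.mem_insert_self _ _)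
    · by_cases hm : ycard F = m
      · exact Or.inl hm
      right
      intro hcon
      have hlt : ycard F < m := lt_of_le_of_ne (MPaux.ycard_le F) hm
      obtain ⟨y, hy⟩ := MPaux.exists_right_notMem hlt
      obtain ⟨hy1, hy2⟩ := MPaux.ycard_insert_right y hy
      have hfaceG : IsFace n m s q r (insert (Sum.inr y) F) := by
        intro i h1 h2
        rw [hy1, hy2]
        exact hcon i h1 h2
      have := hmax _ hfaceG (Finset.subset_insert _ _)
      exact hy (this ▸ Finset.mem_insert_self _ _)
  · rintro ⟨hface, h1, h2⟩
    refine ⟨hface, ?_⟩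
    intro G hG hFG
    by_contra hne
    obtain ⟨v, hvG, hvF⟩ := Finset.exists_of_ssubset (ssubset_of_subset_of_ne hFG hne)
    have hsub : insert v F ⊆ G := Finset.insert_subset hvG hFG
    rcases v with x | y
    · obtain ⟨hx1, hx2⟩ := MPaux.xcard_insert_left x hvF
      have hxG : xcard F + 1 ≤ xcard G := hx1 ▸ MPaux.xcard_mono hsub
      have hyG : ycard F ≤ ycard G := MPaux.ycard_mono hFG
      have hxn : xcard F < n := lt_of_lt_of_le (by omega) (MPaux.xcard_le G)
      rcases h1 with h1 | h1
      · omega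
      · exact h1 fun i hi1 hi2 => by
          rcases hG i hi1 hi2 with h | h
          · exact Or.inl (by omega)
          · exact Or.inr (by omega)
    · obtain ⟨hy1, hy2⟩ := MPaux.ycard_insert_right y hvF
      have hyG : ycard F + 1 ≤ ycard G := hy2 ▸ MPaux.ycard_mono hsub
      have hxG : xcard F ≤ xcard G := MPaux.xcard_mono hFG
      have hym : ycard F < m := lt_of_lt_of_le (by omega) (MPaux.ycard_le G)
      rcases h2 with h2 | h2
      · omega
      · exact h2 fun i hi1 hi2 => by
          rcases hG i hi1 hi2 with h | h
          · exact Or.inl (by omega)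
          · exact Or.inr (by omega)

/-- Combinatorial heart: characterization of the maximal numeric pairs. -/
lemma MPaux.pair_char (n m s : ℕ) (hs : 1 ≤ s) (q r : ℕ → ℕ)
    (hq' : ∀ i j, 1 ≤ i → i < j → j ≤ s + 1 → q i < q j)
    (hr' : ∀ i j, i < j → j ≤ s → r j < r i)
    (hqn : q s ≤ n) (hrm : r 1 ≤ m)
    (hqconv : q (s + 1) = n + 1) (hrconv : r 0 = m + 1)
    (c : ℕ) (hc : c = if 0 < q 1 then 0 else 1)
    (s'' : ℕ) (hs'' : s'' = if 0 < r s then s + 1 else s)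
    (a b : ℕ) (hbm : b ≤ m) :
    ((∀ i, 1 ≤ i → i ≤ s → a < q i ∨ b < r i) ∧
     (a = n ∨ ¬ ∀ i, 1 ≤ i → i ≤ s → a + 1 < q i ∨ b < r i) ∧
     (b = m ∨ ¬ ∀ i, 1 ≤ i → i ≤ s → a < q i ∨ b + 1 < r i)) ↔
    (∃ j, c + 1 ≤ j ∧ j ≤ s'' ∧ a + 1 = q j ∧ b + 1 = r (j - 1)) := by
  classical
  have hc1 : c ≤ 1 := by rw [hc]; split <;> omega
  have hqmono : ∀ i j, 1 ≤ i → i ≤ j → j ≤ s + 1 → q i ≤ q j := by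
    intro i j h1 h2 h3
    rcases eq_or_lt_of_le h2 with rfl | h
    · exact le_rfl
    · exact (hq' i j h1 h h3).le
  have hrmono : ∀ i j, i ≤ j → j ≤ s → r j ≤ r i := by
    intro i j h2 h3
    rcases eq_or_lt_of_le h2 with rfl | h
    · exact le_rfl
    · exact (hr' i j h h3).le
  have hs''le : s'' ≤ s + 1 := by rw [hs'']; split <;> omega
  have hs''ge : s ≤ s'' := by rw [hs'']; split <;> omega
  constructor
  · rintro ⟨hface, hxmax, hymax⟩
    set t := Nat.findGreatest (fun i => 1 ≤ i ∧ q i ≤ a) s with ht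
    have hts : t ≤ s := Nat.findGreatest_le s
    have hspec : 0 < t → 1 ≤ t ∧ q t ≤ a := fun hpos =>
      Nat.findGreatest_of_ne_zero ht.symm (by omega)
    have hle : ∀ i, i ≤ s → 1 ≤ i → q i ≤ a → i ≤ t := fun i h1 h2 h3 =>
      Nat.le_findGreatest h1 ⟨h2, h3⟩
    have hgt : ∀ i, t < i → i ≤ s → ¬(1 ≤ i ∧ q i ≤ a) := fun i h1 h2 =>
      Nat.findGreatest_is_greatest h1 h2
    have hb1 : b < r t := by
      rcases Nat.eq_zero_or_pos t with h0 | hpos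
      · rw [h0, hrconv]; omega
      · obtain ⟨hp1, hp2⟩ := hspec hpos
        rcases hface t hp1 hts with h | h
        · omega
        · exact h
    have hb2 : r t ≤ b + 1 := by
      rcases hymax with hbm' | hcon
      · rcases Nat.eq_zero_or_pos t with h0 | hpos
        · rw [h0, hrconv]; omega
        · have := hrmono 1 t hpos hts
          omega
      · push_neg at hcon
        obtain ⟨i, hi1, hi2, hqi, hri⟩ := hcon
        have hit : i ≤ t := hle i hi2 hi1 (by omega)
        have := hrmono i t hit hts
        omega
    rcases hxmax with han | hcon
    · -- a = n; take j = s + 1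
      have hst : s ≤ t := hle s le_rfl hs (by omega)
      have hts' : t = s := le_antisymm hts hst
      have hrs : 0 < r s := by rw [← hts']; omega
      refine ⟨s + 1, by omega, ?_, by omega, ?_⟩
      · rw [hs'', if_pos hrs]
      · rw [Nat.add_sub_cancel, ← hts']; omega
    · push_neg at hcon
      obtain ⟨i, hi1, hi2, hqi, hri⟩ := hcon
      have hit : t < i := by
        by_contra hcon2
        push_neg at hcon2
        have := hrmono i t hcon2 hts
        omega
      have hqia : a + 1 ≤ q i := by
        by_contra hcon2
        push_neg at hcon2
        have : i ≤ t := hle i hi2 hi1 (by omega)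
        omega
      have hieq : i = t + 1 := by
        by_contra hcon2
        have hlt : t + 1 < i := by omega
        have hnp := hgt (t + 1) (by omega) (by omega)
        have hq1 : a < q (t + 1) := by
          by_contra hcon3
          exact hnp ⟨by omega, by omega⟩
        have := hq' (t + 1) i (by omega) hlt (by omega)
        omega
      have hcj : c + 1 ≤ i := by
        by_cases h : 0 < q 1
        · rw [hc, if_pos h]; omega
        · have h1t : 1 ≤ t := hle 1 hs le_rfl (by omega)
          rw [hc, if_neg h]; omega
      refine ⟨i, hcj, by omega, by omega, ?_⟩
      rw [hieq, Nat.add_sub_cancel]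
      omega
  · rintro ⟨j, hj1, hj2, hja, hjb⟩
    have hj1' : 1 ≤ j := by omega
    have hjs1 : j ≤ s + 1 := by omega
    refine ⟨?_, ?_, ?_⟩
    · intro i hi1 his
      rcases lt_or_ge i j with h | h
      · right
        have := hrmono i (j - 1) (by omega) (by omega)
        omega
      · left
        have := hqmono j i hj1' h (by omega)
        omega
    · rcases eq_or_lt_of_le hjs1 with rfl | hjs
      · left; omega
      · right
        intro hcon
        rcases hcon j hj1' (by omega) with h | h
        · omega
        · have := hr' (j - 1) j (by omega) (by omega)
          omega
    · rcases eq_or_lt_of_le hj1' with hj | hj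
      · left
        have h0 : j - 1 = 0 := by omega
        rw [h0, hrconv] at hjb
        omega
      · right
        intro hcon
        rcases hcon (j - 1) (by omega) (by omega) with h | h
        · have := hq' (j - 1) j (by omega) (by omega) (by omega)
          omega
        · omega

end Helpers

/-- (Proposition 3.6.)  Let `Δ` be the Stanley–Reisner complex of the mixed
product ideal `∑_{i=1}^s I_{q_i} J_{r_i}`, and let `q̄ = (q(1),…,q(s'))`,
`r̄ = (r(1),…,r(s'))` be the associated vectors of Definition 3.5 (encoded by
the hypotheses `hs'`, `hqb`, `hrb`, with the conventions `q_{s+1} = n + 1`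
and `r_0 = m + 1`).  Then the facets of `Δ` are partitioned as
`𝓕(Δ) = 𝓕_1(Δ) ∪ ⋯ ∪ 𝓕_{s'}(Δ)`, where `𝓕_k(Δ)` consists of all subsets
with exactly `q(k)` `x`-vertices and exactly `r(k)` `y`-vertices. -/
theorem facet_partition (n m s : ℕ) (hs : 1 ≤ s) (q r : ℕ → ℕ)
    (hq : ∀ i j, 1 ≤ i → i < j → j ≤ s → q i < q j)
    (hr : ∀ i j, 1 ≤ i → i < j → j ≤ s → r j < r i)
    (hqn : q s ≤ n) (hrm : r 1 ≤ m)
    (hproper : ∀ i, 1 ≤ i → i ≤ s → 0 < q i + r i)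
    (hqconv : q (s + 1) = n + 1) (hrconv : r 0 = m + 1)
    (s' : ℕ) (qb rb : ℕ → ℕ)
    (hs' : s' = if 0 < q 1 then (if 0 < r s then s + 1 else s)
                else (if 0 < r s then s else s - 1))
    (hqb : ∀ i, 1 ≤ i → i ≤ s' → qb i + 1 = if 0 < q 1 then q i else q (i + 1))
    (hrb : ∀ i, 1 ≤ i → i ≤ s' → rb i + 1 = if 0 < q 1 then r (i - 1) else r i) :
    (∀ F : Finset (Fin n ⊕ Fin m),
        IsFacet n m s q r F ↔
          ∃ k, 1 ≤ k ∧ k ≤ s' ∧ xcard F = qb k ∧ ycard F = rb k) ∧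
    (∀ k k', 1 ≤ k → k < k' → k' ≤ s' →
        ¬ ∃ F : Finset (Fin n ⊕ Fin m),
            (xcard F = qb k ∧ ycard F = rb k) ∧
            (xcard F = qb k' ∧ ycard F = rb k')) := by
  classical
  obtain ⟨c, hc⟩ : ∃ c : ℕ, c = if 0 < q 1 then 0 else 1 := ⟨_, rfl⟩
  obtain ⟨s'', hs''⟩ : ∃ t : ℕ, t = if 0 < r s then s + 1 else s := ⟨_, rfl⟩
  have hc1 : c ≤ 1 := by rw [hc]; split <;> omega
  have hss' : s'' = s' + c := by
    rw [hs'', hs', hc]; split_ifs <;> omega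
  have hs''le : s'' ≤ s + 1 := by rw [hs'']; split <;> omega
  have hq' : ∀ i j, 1 ≤ i → i < j → j ≤ s + 1 → q i < q j := by
    intro i j h1 h2 h3
    rcases eq_or_lt_of_le h3 with rfl | h
    · have hqs : q i ≤ q s := by
        rcases eq_or_lt_of_le (by omega : i ≤ s) with rfl | h'
        · exact le_rfl
        · exact (hq i s h1 h' le_rfl).le
      omega
    · exact hq i j h1 h2 (by omega)
  have hr' : ∀ i j, i < j → j ≤ s → r j < r i := by
    intro i j h2 h3
    rcases Nat.eq_zero_or_pos i with rfl | h1
    · have hr1 : r j ≤ r 1 := by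
        rcases eq_or_lt_of_le (by omega : 1 ≤ j) with rfl | h'
        · exact le_rfl
        · exact (hr 1 j le_rfl h' h3).le
      omega
    · exact hr i j h1 h2 h3
  have hqbk : ∀ k, 1 ≤ k → k ≤ s' → qb k + 1 = q (k + c) := by
    intro k h1 h2
    rw [hqb k h1 h2, hc]
    by_cases h : 0 < q 1 <;> simp [h]
  have hrbk : ∀ k, 1 ≤ k → k ≤ s' → rb k + 1 = r (k + c - 1) := by
    intro k h1 h2
    rw [hrb k h1 h2, hc]
    by_cases h : 0 < q 1 <;> simp [h]
  constructor
  · intro F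
    rw [MPaux.facet_iff_num,
      MPaux.pair_char n m s hs q r hq' hr' hqn hrm hqconv hrconv c hc s'' hs''
        (xcard F) (ycard F) (MPaux.ycard_le F)]
    constructor
    · rintro ⟨j, hj1, hj2, hja, hjb⟩
      refine ⟨j - c, by omega, by omega, ?_, ?_⟩
      · have h := hqbk (j - c) (by omega) (by omega)
        rw [(by omega : j - c + c = j)] at h
        omega
      · have h := hrbk (j - c) (by omega) (by omega)
        rw [(by omega : j - c + c = j)] at h
        omega
    · rintro ⟨k, hk1, hk2, hka, hkb⟩
      refine ⟨k + c, by omega, by omega, ?_, ?_⟩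
      · have h := hqbk k hk1 hk2
        omega
      · have h := hrbk k hk1 hk2
        omega
  · rintro k k' hk1 hkk' hk' ⟨F, ⟨hxa, -⟩, hxa', -⟩
    have h1 := hqbk k hk1 (by omega)
    have h2 := hqbk k' (by omega) hk'
    have h3 : q (k + c) < q (k' + c) := hq' (k + c) (k' + c) (by omega) (by omega) (by omega)
    omega
end

section
/- Let $\Delta$ be the simplicial complex on $\{x_1,\dots,x_n\}\cup\{y_1,\dots,y_m\}$ whose facets are $\bigcup_{k=1}^{s'}\mathcal{F}_k$, where $\mathcal{F}_k$ consists of all subsets with exactly $q(k)$ $x$-vertices and $r(k)$ $y$-vertices, $q(1)<\dots<q(s')\le n$, $r(1)>\dots>r(s')\ge 0$. If $q(i+1)=q(i)+1$ for all $i=1,\dots,s'-1$, then $\Delta$ is shellable. -/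
/-- The facets of the complex: `⋃_{k=1}^{s'} 𝓕_k`, where `𝓕_k` is the family
of all subsets with exactly `q(k)` `x`-vertices and `r(k)` `y`-vertices. -/
def famFacets (n m s' : ℕ) (qv rv : ℕ → ℕ) : Set (Finset (Fin n ⊕ Fin m)) :=
  {F | ∃ k, 1 ≤ k ∧ k ≤ s' ∧ xcard F = qv k ∧ ycard F = rv k}

/-- A (not necessarily pure) set of facets is shellable if the facets can be
linearly ordered `F_1,…,F_t` such that for all `a < b` there exist
`v ∈ F_b \ F_a` and `c < b` with `F_b \ F_c = {v}`. -/
def Shellable {n m : ℕ} (Fac : Set (Finset (Fin n ⊕ Fin m))) : Prop :=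
  ∃ (t : ℕ) (ord : Fin t → Finset (Fin n ⊕ Fin m)),
    Function.Injective ord ∧ (∀ a, ord a ∈ Fac) ∧ (∀ F ∈ Fac, ∃ a, ord a = F) ∧
    ∀ a b : Fin t, a < b →
      ∃ v ∈ ord b \ ord a, ∃ c, c < b ∧ ord b \ ord c = {v}

namespace ShellableAux

variable {n m : ℕ}

/-- A code of the vertices into `ℕ`, with `y`-vertices getting larger codes. -/
def code : Fin n ⊕ Fin m → ℕ := Sum.elim (fun x => (x : ℕ)) (fun y => n + y)

lemma code_injective : Function.Injective (code (n := n) (m := m)) := by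
  rintro (x | y) (x' | y') h <;>
    simp only [code, Sum.elim_inl, Sum.elim_inr] at h
  · exact congrArg Sum.inl (Fin.ext h)
  · exact absurd h (by have := x.isLt; omega)
  · exact absurd h (by have := x'.isLt; omega)
  · exact congrArg Sum.inr (Fin.ext (by omega))

lemma code_lt (v : Fin n ⊕ Fin m) : code v < n + m := by
  rcases v with x | y
  · have := x.isLt; simp only [code, Sum.elim_inl]; omega
  · have := y.isLt; simp only [code, Sum.elim_inr]; omega

/-- Binary value of a set of vertices. -/
def val (F : Finset (Fin n ⊕ Fin m)) : ℕ := ∑ v ∈ F, 2 ^ code v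

lemma sum_pow_lt (k : ℕ) : ∑ i ∈ Finset.range k, 2 ^ i < 2 ^ k := by
  induction k with
  | zero => simp
  | succ k ih => rw [Finset.sum_range_succ, pow_succ]; omega

lemma val_le_of_lt {A : Finset (Fin n ⊕ Fin m)} {k : ℕ}
    (h : ∀ a ∈ A, code a < k) : val A < 2 ^ k := by
  have h1 : val A = ∑ i ∈ A.image code, 2 ^ i :=
    (Finset.sum_image (fun a _ b _ hab => code_injective hab)).symm
  have h2 : A.image code ⊆ Finset.range k := by
    intro i hi
    obtain ⟨a, ha, rfl⟩ := Finset.mem_image.mp hi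
    exact Finset.mem_range.mpr (h a ha)
  calc val A = ∑ i ∈ A.image code, 2 ^ i := h1
    _ ≤ ∑ i ∈ Finset.range k, 2 ^ i :=
        Finset.sum_le_sum_of_subset h2
    _ < 2 ^ k := sum_pow_lt k

lemma val_lt_pow (F : Finset (Fin n ⊕ Fin m)) : val F < 2 ^ (n + m) :=
  val_le_of_lt (fun a _ => code_lt a)

/-- The key colex comparison lemma. -/
lemma val_lt_val {A B : Finset (Fin n ⊕ Fin m)} {d : Fin n ⊕ Fin m}
    (hdB : d ∈ B) (hdA : d ∉ A)
    (hmax : ∀ a ∈ A, a ∉ B → code a < code d) : val A < val B := by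
  classical
  have hA : val (A ∩ B) + val (A \ B) = val A := Finset.sum_inter_add_sum_sdiff A B _
  have hB : val (B ∩ A) + val (B \ A) = val B := Finset.sum_inter_add_sum_sdiff B A _
  have hBA : B ∩ A = A ∩ B := Finset.inter_comm B A
  have h1 : val (A \ B) < 2 ^ code d :=
    val_le_of_lt (fun a ha => by
      rw [Finset.mem_sdiff] at ha
      exact hmax a ha.1 ha.2)
  have h2 : 2 ^ code d ≤ val (B \ A) :=
    Finset.single_le_sum (f := fun v => 2 ^ code v) (fun i _ => Nat.zero_le _)
      (Finset.mem_sdiff.mpr ⟨hdB, hdA⟩)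
  rw [hBA] at hB
  omega

lemma val_injective : Function.Injective (val (n := n) (m := m)) := by
  intro A B h
  by_contra hne
  have hne' : ((A \ B) ∪ (B \ A)).Nonempty := by
    rw [Finset.nonempty_iff_ne_empty]
    intro he
    rw [Finset.union_eq_empty] at he
    exact hne (Finset.Subset.antisymm
      (Finset.sdiff_eq_empty_iff_subset.mp he.1)
      (Finset.sdiff_eq_empty_iff_subset.mp he.2))
  obtain ⟨d, hd, hmax⟩ := Finset.exists_max_image _ code hne'
  rw [Finset.mem_union, Finset.mem_sdiff, Finset.mem_sdiff] at hd
  rcases hd with ⟨hdA, hdB⟩ | ⟨hdB, hdA⟩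
  · have : val B < val A := val_lt_val hdA hdB (fun a ha hab => by
      have hle := hmax a (Finset.mem_union_right _ (Finset.mem_sdiff.mpr ⟨ha, hab⟩))
      have : a ≠ d := fun hc => hdB (hc ▸ ha)
      exact lt_of_le_of_ne hle (fun hc => this (code_injective hc)))
    omega
  · have : val A < val B := val_lt_val hdB hdA (fun a ha hab => by
      have hle := hmax a (Finset.mem_union_left _ (Finset.mem_sdiff.mpr ⟨ha, hab⟩))
      have : a ≠ d := fun hc => hdA (hc ▸ ha)
      exact lt_of_le_of_ne hle (fun hc => this (code_injective hc)))
    omega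

/-- The key used to order the facets: lexicographically by `(xcard, colex)`. -/
def key (F : Finset (Fin n ⊕ Fin m)) : ℕ := xcard F * 2 ^ (n + m) + val F

lemma key_lt_of_xcard_lt {A B : Finset (Fin n ⊕ Fin m)} (h : xcard A < xcard B) :
    key A < key B := by
  have h1 : val A < 2 ^ (n + m) := val_lt_pow A
  calc key A < xcard A * 2 ^ (n + m) + 2 ^ (n + m) :=
        Nat.add_lt_add_left h1 _
    _ = (xcard A + 1) * 2 ^ (n + m) := by ring
    _ ≤ xcard B * 2 ^ (n + m) := Nat.mul_le_mul_right _ h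
    _ ≤ key B := Nat.le_add_right _ _

lemma key_lt_of_val_lt {A B : Finset (Fin n ⊕ Fin m)} (h : xcard A = xcard B)
    (hv : val A < val B) : key A < key B := by
  unfold key
  rw [h]
  exact Nat.add_lt_add_left hv _

lemma val_lt_of_key_lt {A B : Finset (Fin n ⊕ Fin m)} (h : xcard A = xcard B)
    (hk : key A < key B) : val A < val B := by
  unfold key at hk
  rw [h] at hk
  omega

lemma key_injective : Function.Injective (key (n := n) (m := m)) := by
  intro A B h
  rcases lt_trichotomy (xcard A) (xcard B) with hx | hx | hx
  · exact absurd h (Nat.ne_of_lt (key_lt_of_xcard_lt hx))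
  · apply val_injective
    unfold key at h
    rw [hx] at h
    omega
  · exact absurd h.symm (Nat.ne_of_lt (key_lt_of_xcard_lt hx))

lemma ycard_le (F : Finset (Fin n ⊕ Fin m)) : ycard F ≤ m := by
  have h : F.filter (fun v => v.isRight) ⊆ Finset.univ.image Sum.inr := by
    intro v hv
    rw [Finset.mem_filter] at hv
    rcases v with x | y
    · simp at hv
    · simp
  calc ycard F ≤ (Finset.univ.image (Sum.inr : Fin m → Fin n ⊕ Fin m)).card :=
        Finset.card_le_card h
    _ = m := by
        rw [Finset.card_image_of_injective _ Sum.inr_injective, Finset.card_univ,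
          Fintype.card_fin]

lemma card_univ_filter_isRight :
    ((Finset.univ : Finset (Fin n ⊕ Fin m)).filter (fun v => v.isRight)).card = m := by
  have h : (Finset.univ : Finset (Fin n ⊕ Fin m)).filter (fun v => v.isRight)
      = Finset.univ.image Sum.inr := by
    ext v
    rcases v with x | y <;> simp
  rw [h, Finset.card_image_of_injective _ Sum.inr_injective, Finset.card_univ,
    Fintype.card_fin]

lemma card_filter_insert_erase (q : Fin n ⊕ Fin m → Bool) {F : Finset (Fin n ⊕ Fin m)}
    {d e : Fin n ⊕ Fin m} (hd : d ∈ F) (he : e ∉ F) (hq : q e = q d) :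
    ((insert e (F.erase d)).filter (fun v => q v)).card
      = (F.filter (fun v => q v)).card := by
  classical
  rw [Finset.filter_insert, Finset.filter_erase]
  by_cases hqd : q d = true
  · rw [if_pos (by rw [hq]; exact hqd)]
    have hdf : d ∈ F.filter (fun v => q v) := Finset.mem_filter.mpr ⟨hd, hqd⟩
    have hef : e ∉ (F.filter (fun v => q v)).erase d := fun hc =>
      he (Finset.mem_of_mem_filter _ (Finset.mem_of_mem_erase hc))
    rw [Finset.card_insert_of_notMem hef, Finset.card_erase_of_mem hdf]
    have : 1 ≤ (F.filter (fun v => q v)).card := Finset.card_pos.mpr ⟨d, hdf⟩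
    omega
  · rw [if_neg (by rw [hq]; simpa using hqd)]
    have hdf : d ∉ F.filter (fun v => q v) := fun hc =>
      hqd (Finset.mem_filter.mp hc).2
    rw [Finset.erase_eq_of_notMem hdf]

lemma isRight_eq_of_isLeft_eq {d e : Fin n ⊕ Fin m} (h : e.isLeft = d.isLeft) :
    e.isRight = d.isRight := by
  rcases d with x | y <;> rcases e with x' | y' <;> simp_all

/-- The main combinatorial step of the shelling. -/
lemma step {s' : ℕ} {qv rv : ℕ → ℕ}
    (hq : ∀ i j, 1 ≤ i → i < j → j ≤ s' → qv i < qv j)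
    (hr : ∀ i j, 1 ≤ i → i < j → j ≤ s' → rv j < rv i)
    (hstep : ∀ i, 1 ≤ i → i < s' → qv (i + 1) = qv i + 1)
    {Fa Fb : Finset (Fin n ⊕ Fin m)}
    (ha : Fa ∈ famFacets n m s' qv rv) (hb : Fb ∈ famFacets n m s' qv rv)
    (hab : key Fa < key Fb) :
    ∃ v ∈ Fb \ Fa, ∃ Fc ∈ famFacets n m s' qv rv, key Fc < key Fb ∧ Fb \ Fc = {v} := by
  classical
  obtain ⟨ka, hka1, hkas, hxa, hya⟩ := ha
  obtain ⟨kb, hkb1, hkbs, hxb, hyb⟩ := hb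
  rcases lt_trichotomy (xcard Fa) (xcard Fb) with hx | hx | hx
  · -- Case A: different classes
    have hkakb : ka < kb := by
      rcases lt_trichotomy ka kb with h | h | h
      · exact h
      · rw [h] at hxa; omega
      · have := hq kb ka hkb1 h hkas; omega
    have hkb2 : 2 ≤ kb := by omega
    have hq' : qv kb = qv (kb - 1) + 1 := by
      have h := hstep (kb - 1) (by omega) (by omega)
      rwa [show kb - 1 + 1 = kb from by omega] at h
    have hrlt : rv kb < rv (kb - 1) := hr (kb - 1) kb (by omega) (by omega) hkbs
    have hrle : rv (kb - 1) ≤ rv ka := by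
      rcases eq_or_lt_of_le (show ka ≤ kb - 1 from by omega) with h | h
      · rw [h]
      · exact le_of_lt (hr ka (kb - 1) hka1 h (by omega))
    have hrm : rv (kb - 1) ≤ m := le_trans hrle (hya ▸ ycard_le Fa)
    -- choose v, an x-vertex of Fb not in Fa
    have hnsub : ¬ (Fb.filter (fun v => v.isLeft) ⊆ Fa.filter (fun v => v.isLeft)) :=
      fun hsub => absurd (Finset.card_le_card hsub) (by
        unfold xcard at hx; omega)
    obtain ⟨v, hvb, hva⟩ := Finset.not_subset.mp hnsub
    rw [Finset.mem_filter] at hvb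
    -- choose Y', a superset of the y-vertices of Fb of size rv (kb - 1)
    obtain ⟨Y', hY1, hY2, hY3⟩ := Finset.exists_subsuperset_card_eq
      (Finset.filter_subset_filter _ (Finset.subset_univ Fb))
      (show (Fb.filter (fun v => v.isRight)).card ≤ rv (kb - 1) from by
        have : ycard Fb = rv kb := hyb
        unfold ycard at this; omega)
      (by rw [card_univ_filter_isRight]; exact hrm)
    set Fc : Finset (Fin n ⊕ Fin m) := (Fb.filter (fun v => v.isLeft)).erase v ∪ Y'
      with hFc
    have hYright : ∀ w ∈ Y', w.isRight = true := fun w hw =>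
      (Finset.mem_filter.mp (hY2 hw)).2
    have hXleft : ∀ w ∈ Fb.filter (fun v => v.isLeft), w.isLeft = true := fun w hw =>
      (Finset.mem_filter.mp hw).2
    have hfilterL : Fc.filter (fun v => v.isLeft) = (Fb.filter (fun v => v.isLeft)).erase v := by
      ext w
      rw [hFc, Finset.mem_filter, Finset.mem_union]
      constructor
      · rintro ⟨h | h, hl⟩
        · exact h
        · exfalso
          have := hYright w h
          rcases w with x | y <;> simp_all
      · intro h
        exact ⟨Or.inl h, hXleft w (Finset.mem_of_mem_erase h)⟩
    have hfilterR : Fc.filter (fun v => v.isRight) = Y' := by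
      ext w
      rw [hFc, Finset.mem_filter, Finset.mem_union]
      constructor
      · rintro ⟨h | h, hl⟩
        · exfalso
          have := hXleft w (Finset.mem_of_mem_erase h)
          rcases w with x | y <;> simp_all
        · exact h
      · intro h
        exact ⟨Or.inr h, hYright w h⟩
    have hxc : xcard Fc = qv (kb - 1) := by
      unfold xcard
      rw [hfilterL, Finset.card_erase_of_mem (Finset.mem_filter.mpr ⟨hvb.1, hvb.2⟩)]
      have : xcard Fb = qv kb := hxb
      unfold xcard at this
      omega
    have hyc : ycard Fc = rv (kb - 1) := by
      unfold ycard; rw [hfilterR]; exact hY3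
    have hvFa : v ∉ Fa := fun hc => hva (Finset.mem_filter.mpr ⟨hc, hvb.2⟩)
    refine ⟨v, Finset.mem_sdiff.mpr ⟨hvb.1, hvFa⟩, Fc,
      ⟨kb - 1, by omega, by omega, hxc, hyc⟩, ?_, ?_⟩
    · apply key_lt_of_xcard_lt
      rw [hxc, hxb]
      exact hq (kb - 1) kb (by omega) (by omega) hkbs
    · ext w
      rw [Finset.mem_sdiff, Finset.mem_singleton, hFc, Finset.mem_union,
        Finset.mem_erase]
      constructor
      · rintro ⟨hwb, hw⟩
        by_contra hne
        rcases hwl : w.isLeft with _ | _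
        · -- w is a y-vertex, so w ∈ Y'
          apply hw
          right
          apply hY1
          rw [Finset.mem_filter]
          exact ⟨hwb, by rcases w with x | y <;> simp_all⟩
        · exact hw (Or.inl ⟨hne, Finset.mem_filter.mpr ⟨hwb, hwl⟩⟩)
      · intro h
        subst h
        refine ⟨hvb.1, ?_⟩
        rintro (⟨hne, _⟩ | hvY)
        · exact hne rfl
        · have h1 := hYright w hvY
          have h2 := hvb.2
          rcases w with x | y <;> simp_all
  · -- Case B: same class
    have hkab : ka = kb := by
      rcases lt_trichotomy ka kb with h | h | h
      · have := hq ka kb hka1 h hkbs; omega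
      · exact h
      · have := hq kb ka hkb1 h hkas; omega
    have hyab : ycard Fa = ycard Fb := by rw [hya, hyb, hkab]
    have hval : val Fa < val Fb := val_lt_of_key_lt hx hab
    have hne : Fa ≠ Fb := fun h => by rw [h] at hval; omega
    have hne' : ((Fa \ Fb) ∪ (Fb \ Fa)).Nonempty := by
      rw [Finset.nonempty_iff_ne_empty]
      intro he
      rw [Finset.union_eq_empty] at he
      exact hne (Finset.Subset.antisymm
        (Finset.sdiff_eq_empty_iff_subset.mp he.1)
        (Finset.sdiff_eq_empty_iff_subset.mp he.2))
    obtain ⟨d, hd, hmax⟩ := Finset.exists_max_image _ code hne'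
    rw [Finset.mem_union, Finset.mem_sdiff, Finset.mem_sdiff] at hd
    have hdB : d ∈ Fb ∧ d ∉ Fa := by
      rcases hd with ⟨hdA, hdB⟩ | h
      · exfalso
        have : val Fb < val Fa := val_lt_val hdA hdB (fun a hac hab' => by
          have hle := hmax a (Finset.mem_union_right _ (Finset.mem_sdiff.mpr ⟨hac, hab'⟩))
          have hne2 : a ≠ d := fun hc => hdB (hc ▸ hac)
          exact lt_of_le_of_ne hle (fun hc => hne2 (code_injective hc)))
        omega
      · exact h
    -- find a mate e of the same side in Fa \ Fb
    set P : Fin n ⊕ Fin m → Bool := fun w => w.isLeft == d.isLeft with hP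
    have hPd : P d = true := by simp [hP]
    have hcard : (Fa.filter (fun w => P w)).card = (Fb.filter (fun w => P w)).card := by
      rcases hdl : d.isLeft with _ | _
      · have h1 : ∀ (F : Finset (Fin n ⊕ Fin m)),
            F.filter (fun w => P w) = F.filter (fun w => w.isRight) := fun F => by
          apply Finset.filter_congr
          intro w _
          rcases w with x | y <;> simp [hP, hdl]
        rw [h1, h1]; exact hyab
      · have h1 : ∀ (F : Finset (Fin n ⊕ Fin m)),
            F.filter (fun w => P w) = F.filter (fun w => w.isLeft) := fun F => by
          apply Finset.filter_congr
          intro w _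
          rcases w with x | y <;> simp [hP, hdl]
        rw [h1, h1]; exact hx
    have hnsub : ¬ (Fa.filter (fun w => P w) ⊆ Fb.filter (fun w => P w)) := by
      intro hsub
      have heq : Fa.filter (fun w => P w) = Fb.filter (fun w => P w) :=
        Finset.eq_of_subset_of_card_le hsub (le_of_eq hcard.symm)
      have : d ∈ Fa.filter (fun w => P w) := by
        rw [heq]; exact Finset.mem_filter.mpr ⟨hdB.1, hPd⟩
      exact hdB.2 (Finset.mem_of_mem_filter _ this)
    obtain ⟨e, hea, heb⟩ := Finset.not_subset.mp hnsub
    rw [Finset.mem_filter] at hea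
    have heFb : e ∉ Fb := fun hc => heb (Finset.mem_filter.mpr ⟨hc, hea.2⟩)
    have hed : e ≠ d := fun hc => heFb (hc ▸ hdB.1)
    have hLeq : e.isLeft = d.isLeft := by
      have := hea.2
      simp only [hP, beq_iff_eq] at this
      exact this
    set Fc : Finset (Fin n ⊕ Fin m) := insert e (Fb.erase d) with hFc
    have hxc : xcard Fc = xcard Fb :=
      card_filter_insert_erase _ hdB.1 heFb hLeq
    have hyc : ycard Fc = ycard Fb :=
      card_filter_insert_erase _ hdB.1 heFb (isRight_eq_of_isLeft_eq hLeq)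
    have hdFc : d ∉ Fc := by
      rw [hFc, Finset.mem_insert]
      rintro (h | h)
      · exact hed h.symm
      · exact (Finset.mem_erase.mp h).1 rfl
    have hcodeed : code e < code d := by
      have hle := hmax e (Finset.mem_union_left _ (Finset.mem_sdiff.mpr ⟨hea.1, heFb⟩))
      exact lt_of_le_of_ne hle (fun hc => hed (code_injective hc))
    have hvalc : val Fc < val Fb := by
      apply val_lt_val hdB.1 hdFc
      intro a hac hab'
      rw [hFc, Finset.mem_insert] at hac
      rcases hac with rfl | h
      · exact hcodeed
      · exact absurd (Finset.mem_of_mem_erase h) hab'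
    refine ⟨d, Finset.mem_sdiff.mpr hdB, Fc,
      ⟨kb, hkb1, hkbs, hxc ▸ hxb, hyc ▸ hyb⟩,
      key_lt_of_val_lt hxc hvalc, ?_⟩
    ext w
    rw [Finset.mem_sdiff, Finset.mem_singleton, hFc, Finset.mem_insert,
      Finset.mem_erase]
    constructor
    · rintro ⟨hwb, hw⟩
      by_contra hne2
      exact hw (Or.inr ⟨hne2, hwb⟩)
    · intro h
      subst h
      exact ⟨hdB.1, by
        rintro (h | ⟨h, _⟩)
        · exact hed h.symm
        · exact h rfl⟩
  · exact absurd hab (not_lt_of_gt (key_lt_of_xcard_lt hx))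

end ShellableAux

open ShellableAux in
/-- (Lemma 3.10.)  If `q(i+1) = q(i) + 1` for `i = 1,…,s'-1`, then the complex
with facets `⋃_{k=1}^{s'} 𝓕_k` is shellable. -/
theorem shellable_of_q_consecutive (n m s' : ℕ) (qv rv : ℕ → ℕ)
    (hq : ∀ i j, 1 ≤ i → i < j → j ≤ s' → qv i < qv j)
    (hr : ∀ i j, 1 ≤ i → i < j → j ≤ s' → rv j < rv i)
    (hqn : qv s' ≤ n)
    (hstep : ∀ i, 1 ≤ i → i < s' → qv (i + 1) = qv i + 1) :
    Shellable (famFacets n m s' qv rv) := by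
  classical
  set S : Finset (Finset (Fin n ⊕ Fin m)) :=
    Finset.univ.filter (fun F => F ∈ famFacets n m s' qv rv) with hSdef
  have hS : ∀ F, F ∈ S ↔ F ∈ famFacets n m s' qv rv := by
    intro F; simp [hSdef]
  set T : Finset ℕ := S.image key with hTdef
  set iso := T.orderIsoOfFin rfl with hiso
  have hmem : ∀ a : Fin T.card, ∃ F, F ∈ S ∧ key F = (iso a : ℕ) := by
    intro a
    have h : (iso a : ℕ) ∈ S.image key := (iso a).2
    obtain ⟨F, hF1, hF2⟩ := Finset.mem_image.mp h
    exact ⟨F, hF1, hF2⟩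
  set ord : Fin T.card → Finset (Fin n ⊕ Fin m) := fun a => (hmem a).choose with hord
  have hordS : ∀ a, ord a ∈ S := fun a => (hmem a).choose_spec.1
  have hkey : ∀ a, key (ord a) = (iso a : ℕ) := fun a => (hmem a).choose_spec.2
  have hsurj : ∀ F ∈ famFacets n m s' qv rv, ∃ a, ord a = F := by
    intro F hF
    have hFS : F ∈ S := (hS F).mpr hF
    have hFT : key F ∈ T := Finset.mem_image_of_mem key hFS
    obtain ⟨a, ha⟩ := iso.surjective ⟨key F, hFT⟩
    refine ⟨a, key_injective ?_⟩
    rw [hkey a, ha]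
  refine ⟨T.card, ord, ?_, fun a => (hS _).mp (hordS a), hsurj, ?_⟩
  · intro a b h
    apply iso.injective
    apply Subtype.ext
    rw [← hkey a, ← hkey b, h]
  · intro a b hab
    have hk : key (ord a) < key (ord b) := by
      rw [hkey a, hkey b]
      exact_mod_cast iso.lt_iff_lt.mpr hab
    obtain ⟨v, hv, Fc, hFc, hkc, hsd⟩ :=
      step hq hr hstep ((hS _).mp (hordS a)) ((hS _).mp (hordS b)) hk
    obtain ⟨c, hc⟩ := hsurj Fc hFc
    refine ⟨v, hv, c, ?_, by rw [hc]; exact hsd⟩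
    have : key (ord c) < key (ord b) := by rw [hc]; exact hkc
    rw [hkey c, hkey b] at this
    exact iso.lt_iff_lt.mp (by exact_mod_cast this)
end

section
/- Let $\Delta$ be the simplicial complex on $\{x_1,\dots,x_n\}\cup\{y_1,\dots,y_m\}$ whose facets are $\bigcup_{k=1}^{s'}\mathcal{F}_k$, where $\mathcal{F}_k$ consists of all subsets with exactly $q(k)$ $x$-vertices and $r(k)$ $y$-vertices, $q(1)<\dots<q(s')\le n$, $r(1)>\dots>r(s')\ge 0$. If $r(i+1)=r(i)-1$ for all $i=1,\dots,s'-1$, then $\Delta$ is shellable. -/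
/-!
Order the facets by their number of `y`-vertices and, within one family `𝓕_k`,
colexicographically. Suppose `G` precedes `F ∈ 𝓕_k`. If `G` lies in another family, it has
fewer `y`-vertices, so `k < s'` and some `y`-vertex `v` of `F` is missing from `G`; trading `v`
for `q(k+1) - q(k)` fresh `x`-vertices gives a facet of `𝓕_{k+1}` (this is where
`r(k+1) = r(k) - 1` enters) which precedes `F` and contains `F \ {v}`. If `G ∈ 𝓕_k`, let `v` be
the colex-largest vertex of `F \ G`; counting shows that `G \ F` has a vertex `u` of the same
kind as `v`, and trading `v` for `u` gives an earlier facet of `𝓕_k` containing `F \ {v}`.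
-/

open Finset

theorem shellable_of_key {n m : ℕ} {β : Type*} [LinearOrder β]
    {Fac : Set (Finset (Fin n ⊕ Fin m))} (key : Finset (Fin n ⊕ Fin m) → β)
    (hkey : Set.InjOn key Fac)
    (hshell : ∀ F ∈ Fac, ∀ G ∈ Fac, key G < key F →
      ∃ v ∈ F \ G, ∃ H ∈ Fac, key H < key F ∧ F \ H = {v}) :
    Shellable Fac := by
  classical
  set T := (Fac.toFinite.image key).toFinset
  set e := T.orderEmbOfFin rfl
  set ord := fun a => Function.invFunOn key Fac (e a)
  have hord (a) : ord a ∈ Fac ∧ key (ord a) = e a := by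
    have hea : e a ∈ key '' Fac :=
      (Fac.toFinite.image key).mem_toFinset.1 (T.orderEmbOfFin_mem rfl a)
    exact ⟨Function.invFunOn_mem hea, Function.invFunOn_eq hea⟩
  have hsurj (F) (hF : F ∈ Fac) : ∃ a, ord a = F := by
    have hkeyF : key F ∈ Set.range e := by
      rw [T.range_orderEmbOfFin, Set.Finite.coe_toFinset]
      exact Set.mem_image_of_mem key hF
    obtain ⟨a, ha⟩ := hkeyF
    exact ⟨a, hkey (hord a).1 hF ((hord a).2.trans ha)⟩
  refine ⟨#T, ord, fun a b hab => e.injective ?_, fun a => (hord a).1, hsurj, ?_⟩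
  · rw [← (hord a).2, ← (hord b).2, hab]
  intro a b hab
  have hlt : key (ord a) < key (ord b) := by
    rw [(hord a).2, (hord b).2]; exact e.strictMono hab
  obtain ⟨v, hv, H, hH, hHb, hsd⟩ := hshell _ (hord b).1 _ (hord a).1 hlt
  obtain ⟨c, rfl⟩ := hsurj H hH
  refine ⟨v, hv, c, ?_, hsd⟩
  rw [(hord c).2, (hord b).2] at hHb
  exact e.lt_iff_lt.1 hHb

namespace Finset

variable {α β : Type*} [DecidableEq α] [LinearOrder β]

theorem exists_forall_lt_of_toColex_map_lt (e : α ↪ β) {s t : Finset α}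
    (h : toColex (t.map e) < toColex (s.map e)) :
    ∃ v ∈ s \ t, ∀ u ∈ t \ s, e u < e v := by
  obtain ⟨_, hvs, hvt, hmax⟩ := Colex.toColex_lt_toColex_iff_exists_forall_lt.1 h
  obtain ⟨v, hv, rfl⟩ := mem_map.1 hvs
  refine ⟨v, mem_sdiff.2 ⟨hv, fun hvt' => hvt (mem_map_of_mem e hvt')⟩, fun u hu => ?_⟩
  rw [mem_sdiff] at hu
  exact hmax _ (mem_map_of_mem e hu.1) (by simpa using hu.2)

theorem toColex_map_insert_erase_lt (e : α ↪ β) {s : Finset α} {u v : α} (hv : v ∈ s)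
    (hu : u ∉ s) (huv : e u < e v) :
    toColex ((insert u (s.erase v)).map e) < toColex (s.map e) := by
  refine Colex.toColex_lt_toColex_iff_exists_forall_lt.2
    ⟨e v, mem_map_of_mem e hv, ?_, fun b hb hbs => ?_⟩
  · simp [huv.ne']
  · obtain ⟨w, hw, rfl⟩ := mem_map.1 hb
    obtain rfl | hw := mem_insert.1 hw
    · exact huv
    · exact absurd (mem_map_of_mem e (mem_of_mem_erase hw)) hbs

theorem card_filter_insert_erase (p : α → Prop) [DecidablePred p] {s : Finset α} {u v : α}
    (hv : v ∈ s) (hu : u ∉ s) (huv : p u ↔ p v) :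
    #((insert u (s.erase v)).filter p) = #(s.filter p) := by
  rw [filter_insert, filter_erase]
  by_cases hpv : p v
  · have hu' : u ∉ (s.filter p).erase v := fun h => hu (mem_of_mem_filter u (mem_of_mem_erase h))
    rw [if_pos (huv.2 hpv), card_insert_of_notMem hu',
      card_erase_add_one (mem_filter.2 ⟨hv, hpv⟩)]
  · rw [if_neg (mt huv.1 hpv), erase_eq_of_notMem (fun h => hpv (mem_filter.1 h).2)]

theorem exists_mem_sdiff_of_card_filter_eq (p : α → Prop) [DecidablePred p] {s t : Finset α}
    (h : #(s.filter p) = #(t.filter p)) {v : α} (hv : v ∈ s \ t) (hpv : p v) :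
    ∃ u ∈ t \ s, p u := by
  by_contra! hts
  have hsub : t.filter p ⊆ s.filter p := fun u hu => by
    obtain ⟨hut, hpu⟩ := mem_filter.1 hu
    exact mem_filter.2 ⟨by_contra fun hus => hts u (mem_sdiff.2 ⟨hut, hus⟩) hpu, hpu⟩
  have heq : t.filter p = s.filter p := eq_of_subset_of_card_le hsub h.le
  have hvt : v ∈ t.filter p := heq ▸ mem_filter.2 ⟨(mem_sdiff.1 hv).1, hpv⟩
  exact (mem_sdiff.1 hv).2 (mem_of_mem_filter v hvt)

theorem exists_exchange_of_toColex_map_lt {γ : Type*} [DecidableEq γ] (e : α ↪ β)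
    (c : α → γ) {s t : Finset α} (hc : ∀ g, #(s.filter (c · = g)) = #(t.filter (c · = g)))
    (h : toColex (t.map e) < toColex (s.map e)) :
    ∃ v ∈ s \ t, ∃ u ∉ s, c u = c v ∧ e u < e v := by
  obtain ⟨v, hv, hmax⟩ := exists_forall_lt_of_toColex_map_lt e h
  obtain ⟨u, hu, hcu⟩ := exists_mem_sdiff_of_card_filter_eq _ (hc (c v)) hv rfl
  exact ⟨v, hv, u, (mem_sdiff.1 hu).2, hcu, hmax u hu⟩

theorem sdiff_insert_erase_self {s : Finset α} {u v : α} (hv : v ∈ s) (hu : u ∉ s) :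
    s \ insert u (s.erase v) = {v} := by
  ext w
  by_cases hwv : w = v
  · subst hwv; simp [hv, ne_of_mem_of_not_mem hv hu]
  · simp +contextual [hwv]

end Finset

section SumVertices

variable {n m : ℕ}

theorem xcard_eq_card_toLeft (F : Finset (Fin n ⊕ Fin m)) : xcard F = #F.toLeft := by
  have : F.filter (·.isLeft) = F.toLeft.map .inl := by ext (_ | _) <;> simp
  rw [xcard, this, card_map]

theorem ycard_eq_card_toRight (F : Finset (Fin n ⊕ Fin m)) : ycard F = #F.toRight := by
  have : F.filter (·.isRight) = F.toRight.map .inr := by ext (_ | _) <;> simp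
  rw [ycard, this, card_map]

theorem exists_inr_mem_sdiff_of_ycard_lt {F G : Finset (Fin n ⊕ Fin m)}
    (h : ycard G < ycard F) : ∃ y, .inr y ∈ F \ G := by
  rw [ycard_eq_card_toRight, ycard_eq_card_toRight] at h
  obtain ⟨y, hyF, hyG⟩ := exists_mem_notMem_of_card_lt_card h
  exact ⟨y, mem_sdiff.2 ⟨mem_toRight.1 hyF, fun h => hyG (mem_toRight.2 h)⟩⟩

theorem exists_sdiff_eq_inr_of_xcard_add_le {F : Finset (Fin n ⊕ Fin m)} {y : Fin m}
    (hy : .inr y ∈ F) {j : ℕ} (hj : xcard F + j ≤ n) :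
    ∃ H, xcard H = xcard F + j ∧ ycard H + 1 = ycard F ∧ F \ H = {.inr y} := by
  rw [xcard_eq_card_toLeft] at hj
  obtain ⟨B, hB, hBcard⟩ := exists_subset_card_eq (s := F.toLeftᶜ) (n := j)
    (by rw [card_compl, Fintype.card_fin]; omega)
  refine ⟨(F.toLeft ∪ B).disjSum (F.toRight.erase y), ?_, ?_, ?_⟩
  · rw [xcard_eq_card_toLeft, xcard_eq_card_toLeft, toLeft_disjSum,
      card_union_of_disjoint (disjoint_of_subset_right hB disjoint_compl_right), hBcard]
  · rw [ycard_eq_card_toRight, ycard_eq_card_toRight, toRight_disjSum,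
      card_erase_add_one (mem_toRight.2 hy)]
  · ext (x | z)
    · simp +contextual
    · by_cases hz : z = y <;> simp [hz, hy]

theorem card_filter_isLeft_eq_false (F : Finset (Fin n ⊕ Fin m)) :
    #(F.filter (·.isLeft = false)) = ycard F := by
  simp only [ycard, Sum.isLeft_eq_false]

theorem exists_exchange_of_xcard_eq_of_ycard_eq {β : Type*} [LinearOrder β]
    (e : Fin n ⊕ Fin m ↪ β) {F G : Finset (Fin n ⊕ Fin m)}
    (hx : xcard F = xcard G) (hy : ycard F = ycard G)
    (h : toColex (G.map e) < toColex (F.map e)) :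
    ∃ v ∈ F \ G, ∃ H, xcard H = xcard F ∧ ycard H = ycard F ∧
      toColex (H.map e) < toColex (F.map e) ∧ F \ H = {v} := by
  have hc (g : Bool) : #(F.filter (·.isLeft = g)) = #(G.filter (·.isLeft = g)) := by
    cases g
    · rw [card_filter_isLeft_eq_false, card_filter_isLeft_eq_false, hy]
    · exact hx
  obtain ⟨v, hv, u, hu, huv, hlt⟩ := exists_exchange_of_toColex_map_lt e Sum.isLeft hc h
  have hvF := (mem_sdiff.1 hv).1
  refine ⟨v, hv, insert u (F.erase v), ?_, ?_, toColex_map_insert_erase_lt e hvF hu hlt,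
    sdiff_insert_erase_self hvF hu⟩
  · exact card_filter_insert_erase _ hvF hu (by rw [huv])
  · rw [← card_filter_isLeft_eq_false, ← card_filter_isLeft_eq_false]
    exact card_filter_insert_erase _ hvF hu (by rw [huv])

end SumVertices

-- The vertices are ordered through `finSumFinEquiv`; any linear order would do.
def shellingKey {n m : ℕ} (F : Finset (Fin n ⊕ Fin m)) :
    ℕ ×ₗ Colex (Finset (Fin (n + m))) :=
  toLex (ycard F, toColex (F.map finSumFinEquiv.toEmbedding))

theorem shellingKey_injective {n m : ℕ} : Function.Injective (shellingKey (n := n) (m := m)) :=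
  fun _ _ h => map_injective _ (toColex.injective (congrArg (fun k => (ofLex k).2) h))

/-- (Lemma 3.11.)  If `r(i+1) = r(i) - 1` for `i = 1,…,s·-1`, then the complex
with facets `⋃_{k=1}^{s'} 𝓕_k` is shellable. -/
theorem shellable_of_r_consecutive (n m s' : ℕ) (qv rv : ℕ → ℕ)
    (hq : ∀ i j, 1 ≤ i → i < j → j ≤ s' → qv i < qv j)
    (hr : ∀ i j, 1 ≤ i → i < j → j ≤ s' → rv j < rv i)
    (hqn : qv s' ≤ n)
    (hstep : ∀ i, 1 ≤ i → i < s' → rv i = rv (i + 1) + 1) :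
    Shellable (famFacets n m s' qv rv) := by
  have hqm : StrictMonoOn qv (Set.Icc 1 s') := fun i hi j hj hij => hq i j hi.1 hij hj.2
  have hra : StrictAntiOn rv (Set.Icc 1 s') := fun i hi j hj hij => hr i j hi.1 hij hj.2
  refine shellable_of_key shellingKey shellingKey_injective.injOn ?_
  rintro F ⟨k, hk1, hks, hxF, hyF⟩ G ⟨l, hl1, hls, hxG, hyG⟩ hGF
  rcases Prod.Lex.toLex_lt_toLex.1 hGF with hy | ⟨hy, hcolex⟩
  · have hkl : k < l := (hra.lt_iff_gt ⟨hl1, hls⟩ ⟨hk1, hks⟩).1 (hyG ▸ hyF ▸ hy)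
    have hq_succ : qv k < qv (k + 1) := hqm ⟨hk1, hks⟩ ⟨by omega, by omega⟩ (by omega)
    have hq_le : qv (k + 1) ≤ n :=
      (hqm.monotoneOn ⟨by omega, by omega⟩ ⟨by omega, le_rfl⟩ (by omega)).trans hqn
    obtain ⟨y, hyFG⟩ := exists_inr_mem_sdiff_of_ycard_lt hy
    obtain ⟨H, hxH, hyH, hFH⟩ :=
      exists_sdiff_eq_inr_of_xcard_add_le (mem_sdiff.1 hyFG).1 (j := qv (k + 1) - qv k) (by omega)
    have hr_succ : rv k = rv (k + 1) + 1 := hstep k hk1 (by omega)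
    exact ⟨_, hyFG, H, ⟨k + 1, by omega, by omega, by omega, by omega⟩,
      Prod.Lex.toLex_lt_toLex.2 (Or.inl (by omega)), hFH⟩
  · obtain rfl : l = k := hra.injOn ⟨hl1, hls⟩ ⟨hk1, hks⟩ (hyG ▸ hyF ▸ hy)
    obtain ⟨v, hv, H, hxH, hyH, hlt, hFH⟩ :=
      exists_exchange_of_xcard_eq_of_ycard_eq _ (hxF.trans hxG.symm) hy.symm hcolex
    exact ⟨v, hv, H, ⟨l, hl1, hls, hxH.trans hxF, hyH.trans hyF⟩,
      Prod.Lex.toLex_lt_toLex.2 (Or.inr ⟨hyH, hlt⟩), hFH⟩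
end

section
/- Let $\Delta$ be the simplicial complex on $\{x_1,\dots,x_n\}\cup\{y_1,\dots,y_m\}$ whose facets are $\bigcup_{k=1}^{s'}\mathcal{F}_k$, where $\mathcal{F}_k$ consists of all subsets with exactly $q(k)$ $x$-vertices and $r(k)$ $y$-vertices, $q(1)<\dots<q(s')\le n$, $r(1)>\dots>r(s')\ge 0$. If $\Delta$ is strongly connected, then $q(i+1)=q(i)+1$ and $r(i+1)=r(i)-1$ for all $i=1,\dots,s'-1$. -/
/-- A pure set of facets is strongly connected if every two facets are joined
by a chain of facets in which consecutive facets intersect in codimension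
one, i.e. `dim (F_i ∩ F_{i+1}) = dim Δ - 1`, i.e.
`|F_i ∩ F_{i+1}| = |F_i| - 1`. -/
def StronglyConnected {n m : ℕ} (Fac : Set (Finset (Fin n ⊕ Fin m))) : Prop :=
  ∀ F ∈ Fac, ∀ G ∈ Fac, ∃ (t : ℕ) (c : ℕ → Finset (Fin n ⊕ Fin m)),
    c 0 = F ∧ c t = G ∧ (∀ i ≤ t, c i ∈ Fac) ∧
    ∀ i < t, (c i ∩ c (i + 1)).card + 1 = (c i).card

theorem exists_eq_of_succ_le_add_one {f : ℕ → ℕ} {t v : ℕ} (hstep : ∀ j < t, f (j + 1) ≤ f j + 1)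
    (h0 : f 0 ≤ v) (ht : v ≤ f t) : ∃ j ≤ t, f j = v := by
  induction t with
  | zero => exact ⟨0, le_rfl, le_antisymm h0 ht⟩
  | succ t ih =>
    by_cases hv : v ≤ f t
    · obtain ⟨j, hj, hjv⟩ := ih (fun j hj => hstep j (by omega)) hv
      exact ⟨j, by omega, hjv⟩
    · have := hstep t t.lt_succ_self
      exact ⟨t + 1, le_rfl, by omega⟩

theorem Finset.card_filter_le_card_filter_add_card_sdiff {α : Type*} [DecidableEq α]
    (p : α → Prop) [DecidablePred p] (F G : Finset α) :
    (G.filter p).card ≤ (F.filter p).card + (G \ F).card := by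
  have hsub : G.filter p ⊆ F.filter p ∪ (G \ F) := by
    intro v hv
    rw [Finset.mem_filter] at hv
    by_cases hvF : v ∈ F
    · exact Finset.mem_union_left _ (Finset.mem_filter.mpr ⟨hvF, hv.2⟩)
    · exact Finset.mem_union_right _ (Finset.mem_sdiff.mpr ⟨hv.1, hvF⟩)
  exact (Finset.card_le_card hsub).trans (Finset.card_union_le _ _)

theorem Finset.card_sdiff_eq_one_of_card_inter_add_one {α : Type*} [DecidableEq α]
    {F G : Finset α} (hcard : F.card = G.card) (hinter : (F ∩ G).card + 1 = F.card) :
    (G \ F).card = 1 := by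
  rw [Finset.card_sdiff]
  omega

section Bipartite

variable {n m : ℕ}

theorem card_eq_xcard_add_ycard (F : Finset (Fin n ⊕ Fin m)) : F.card = xcard F + ycard F := by
  have hright : F.filter (fun v => v.isRight) = F.filter (fun v => ¬ v.isLeft) :=
    Finset.filter_congr fun v _ => by cases v <;> simp
  rw [xcard, ycard, hright, Finset.card_filter_add_card_filter_not]

theorem xcard_le_xcard_add_one {F G : Finset (Fin n ⊕ Fin m)} (hcard : F.card = G.card)
    (hinter : (F ∩ G).card + 1 = F.card) : xcard G ≤ xcard F + 1 := by
  have h := Finset.card_filter_le_card_filter_add_card_sdiff (fun v => v.isLeft) F G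
  rwa [Finset.card_sdiff_eq_one_of_card_inter_add_one hcard hinter] at h

theorem exists_xcard_eq_ycard_eq {q r : ℕ} (hq : q ≤ n) (hr : r ≤ m) :
    ∃ F : Finset (Fin n ⊕ Fin m), xcard F = q ∧ ycard F = r := by
  obtain ⟨A, -, hA⟩ := (Finset.univ : Finset (Fin n)).exists_subset_card_eq (by simpa using hq)
  obtain ⟨B, -, hB⟩ := (Finset.univ : Finset (Fin m)).exists_subset_card_eq (by simpa using hr)
  refine ⟨A.map .inl ∪ B.map .inr, ?_, ?_⟩ <;>
    simp [xcard, ycard, Finset.filter_union, Finset.filter_map, hA, hB]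

theorem StronglyConnected.exists_mem_xcard_eq {Fac : Set (Finset (Fin n ⊕ Fin m))}
    (hconn : StronglyConnected Fac) (hpure : ∀ F ∈ Fac, ∀ G ∈ Fac, F.card = G.card)
    {F G : Finset (Fin n ⊕ Fin m)} (hF : F ∈ Fac) (hG : G ∈ Fac) {v : ℕ}
    (hFv : xcard F ≤ v) (hvG : v ≤ xcard G) : ∃ H ∈ Fac, xcard H = v := by
  obtain ⟨t, c, rfl, rfl, hmem, hstep⟩ := hconn F hF G hG
  obtain ⟨j, hj, hjv⟩ := exists_eq_of_succ_le_add_one (f := fun j => xcard (c j))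
    (fun j hj => xcard_le_xcard_add_one (hpure _ (hmem j hj.le) _ (hmem (j + 1) hj)) (hstep j hj))
    hFv hvG
  exact ⟨c j, hmem j hj, hjv⟩

theorem exists_mem_famFacets_xcard_eq {s' : ℕ} {qv rv : ℕ → ℕ} {k : ℕ} (hk : k ∈ Set.Icc 1 s')
    (hqn : qv k ≤ n) (hrm : rv k ≤ m) : ∃ F ∈ famFacets n m s' qv rv, xcard F = qv k := by
  obtain ⟨F, hx, hy⟩ := exists_xcard_eq_ycard_eq hqn hrm
  exact ⟨F, ⟨k, hk.1, hk.2, hx, hy⟩, hx⟩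

theorem card_eq_of_mem_famFacets {s' : ℕ} {qv rv : ℕ → ℕ}
    (hpure : ∀ k, 1 ≤ k → k ≤ s' → qv k + rv k = qv 1 + rv 1) :
    ∀ F ∈ famFacets n m s' qv rv, ∀ G ∈ famFacets n m s' qv rv, F.card = G.card := by
  rintro F ⟨k, hk1, hks, hFx, hFy⟩ G ⟨l, hl1, hls, hGx, hGy⟩
  rw [card_eq_xcard_add_ycard, card_eq_xcard_add_ycard, hFx, hFy, hGx, hGy,
    hpure k hk1 hks, hpure l hl1 hls]

end Bipartite

theorem consecutive_of_stronglyConnected_general (n m s' : ℕ)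
    (qv rv : ℕ → ℕ)
    (hq : ∀ i j, 1 ≤ i → i < j → j ≤ s' → qv i < qv j)
    (hr : ∀ i j, 1 ≤ i → i < j → j ≤ s' → rv j < rv i)
    (hqn : qv s' ≤ n) (hrm : rv 1 ≤ m)
    (hpure : ∀ k, 1 ≤ k → k ≤ s' → qv k + rv k = qv 1 + rv 1)
    (hconn : StronglyConnected (famFacets n m s' qv rv)) :
    ∀ i, 1 ≤ i → i < s' → qv (i + 1) = qv i + 1 ∧ rv i = rv (i + 1) + 1 := by
  intro i hi his
  have hqmono : StrictMonoOn qv (Set.Icc 1 s') := fun i hi j hj hij => hq i j hi.1 hij hj.2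
  have hranti : StrictAntiOn rv (Set.Icc 1 s') := fun i hi j hj hij => hr i j hi.1 hij hj.2
  have hfacet : ∀ k ∈ Set.Icc 1 s', ∃ F ∈ famFacets n m s' qv rv, xcard F = qv k := fun k hk =>
    exists_mem_famFacets_xcard_eq hk
      ((hqmono.monotoneOn hk ⟨hk.1.trans hk.2, le_rfl⟩ hk.2).trans hqn)
      ((hranti.antitoneOn ⟨le_rfl, hk.1.trans hk.2⟩ hk hk.1).trans hrm)
  have hi_mem : i ∈ Set.Icc 1 s' := ⟨hi, his.le⟩
  have hsucc_mem : i + 1 ∈ Set.Icc 1 s' := ⟨by omega, his⟩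
  obtain ⟨F, hF, hFx⟩ := hfacet i hi_mem
  obtain ⟨G, hG, hGx⟩ := hfacet (i + 1) hsucc_mem
  have hlt : qv i < qv (i + 1) := hqmono hi_mem hsucc_mem i.lt_succ_self
  have hq_succ : qv (i + 1) = qv i + 1 := by
    by_contra hne
    obtain ⟨H, ⟨k, hk1, hks, hHx, -⟩, hH⟩ :=
      hconn.exists_mem_xcard_eq (card_eq_of_mem_famFacets hpure) hF hG (v := qv i + 1)
        (by omega) (by omega)
    have hik : i < k := (hqmono.lt_iff_lt hi_mem ⟨hk1, hks⟩).mp (by omega)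
    have hki : k < i + 1 := (hqmono.lt_iff_lt ⟨hk1, hks⟩ hsucc_mem).mp (by omega)
    omega
  have hpure_i := hpure i hi his.le
  have hpure_succ := hpure (i + 1) (by omega) his
  exact ⟨hq_succ, by omega⟩

/-- (Part of Theorem 3.12.)  If the (pure) complex with facets
`⋃_{k=1}^{s'} 𝓕_k` is strongly connected, then `q(i+1) = q(i) + 1` and
`r(i+1) = r(i) - 1` for all `i = 1,…,s'-1`. -/
theorem consecutive_of_stronglyConnected (n m s' : ℕ) (hs' : 1 ≤ s')
    (qv rv : ℕ → ℕ)
    (hq : ∀ i j, 1 ≤ i → i < j → j ≤ s' → qv i < qv j)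
    (hr : ∀ i j, 1 ≤ i → i < j → j ≤ s' → rv j < rv i)
    (hqn : qv s' ≤ n) (hrm : rv 1 ≤ m)
    (hpure : ∀ k, 1 ≤ k → k ≤ s' → qv k + rv k = qv 1 + rv 1)
    (hconn : StronglyConnected (famFacets n m s' qv rv)) :
    ∀ i, 1 ≤ i → i < s' → qv (i + 1) = qv i + 1 ∧ rv i = rv (i + 1) + 1 :=
  consecutive_of_stronglyConnected_general n m s' qv rv hq hr hqn hrm hpure hconn
end

section
/- Let $\Delta$ be as in the facet-partition setting with vectors $\bar q, \bar r$ and $\sigma(i)=q(i)+r(i)$. Suppose that for every $0\le l\le \dim\Delta+1$ the complex $\Delta^{[l-1]}$ is strongly connected. Then $\sigma$ is unimodal: there exists $k\in\{1,\dots,s'\}$ with $\sigma(1)\le\sigma(2)\le\dots\le\sigma(k)\ge\sigma(k+1)\ge\dots\ge\sigma(s')$. -/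
/-- Faces of the complex `Δ` whose facets are the sets with exactly `q(k)`
`x`-vertices and `r(k)` `y`-vertices for some `k = 1,…,s'`. -/
def IsFaceOf (n m s' : ℕ) (qv rv : ℕ → ℕ) (F : Finset (Fin n ⊕ Fin m)) : Prop :=
  ∃ k, 1 ≤ k ∧ k ≤ s' ∧ xcard F ≤ qv k ∧ ycard F ≤ rv k

/-- The facets of the pure skeleton complex `Δ^{[l-1]}`: the faces of `Δ` of
dimension exactly `l - 1`, i.e. of cardinality `l`. -/
def skelFacets (n m s' : ℕ) (qv rv : ℕ → ℕ) (l : ℕ) : Set (Finset (Fin n ⊕ Fin m)) :=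
  {F | IsFaceOf n m s' qv rv F ∧ F.card = l}

lemma xcard_add_ycard {n m : ℕ} (F : Finset (Fin n ⊕ Fin m)) :
    xcard F + ycard F = F.card := by
  unfold xcard ycard
  rw [show F.filter (fun v => v.isRight) = F.filter (fun v => ¬ v.isLeft = true) from
    Finset.filter_congr (by intro v _; cases v <;> simp)]
  exact Finset.card_filter_add_card_filter_not _

lemma xcard_disjSum {n m : ℕ} (A : Finset (Fin n)) (B : Finset (Fin m)) :
    xcard (A.disjSum B) = A.card := by
  unfold xcard
  rw [show (A.disjSum B).filter (fun v => v.isLeft) = A.map ⟨Sum.inl, Sum.inl_injective⟩ from ?_]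
  · exact Finset.card_map _
  · ext v; cases v <;> simp

lemma ycard_disjSum {n m : ℕ} (A : Finset (Fin n)) (B : Finset (Fin m)) :
    ycard (A.disjSum B) = B.card := by
  unfold ycard
  rw [show (A.disjSum B).filter (fun v => v.isRight) = B.map ⟨Sum.inr, Sum.inr_injective⟩ from ?_]
  · exact Finset.card_map _
  · ext v; cases v <;> simp

lemma xcard_step {n m l : ℕ} {F G : Finset (Fin n ⊕ Fin m)} (hF : F.card = l) (hG : G.card = l)
    (hFG : (F ∩ G).card + 1 = F.card) :
    xcard G ≤ xcard F + 1 := by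
  have h1 : xcard G ≤ xcard (F ∩ G) + (G \ (F ∩ G)).card := by
    unfold xcard
    calc (G.filter (fun v => v.isLeft)).card
        ≤ (((F ∩ G).filter (fun v => v.isLeft)) ∪ (G \ (F ∩ G))).card := by
          apply Finset.card_le_card
          intro v hv
          simp only [Finset.mem_filter, Finset.mem_union, Finset.mem_sdiff, Finset.mem_inter] at *
          by_cases hvF : v ∈ F
          · exact Or.inl ⟨⟨hvF, hv.1⟩, hv.2⟩
          · exact Or.inr ⟨hv.1, fun h => absurd h.1 hvF⟩
      _ ≤ _ := Finset.card_union_le _ _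
  have h2 : (G \ (F ∩ G)).card = G.card - (F ∩ G).card :=
    Finset.card_sdiff_of_subset Finset.inter_subset_right
  have h3 : xcard (F ∩ G) ≤ xcard F :=
    Finset.card_le_card (Finset.filter_subset_filter _ Finset.inter_subset_left)
  omega

lemma nat_ivt (v : ℕ) : ∀ (t : ℕ) (f : ℕ → ℕ), (∀ i < t, f (i+1) ≤ f i + 1) →
    f 0 ≤ v → v ≤ f t → ∃ i ≤ t, f i = v := by
  intro t
  induction t with
  | zero => exact fun f _ h1 h2 => ⟨0, le_refl 0, le_antisymm h1 h2⟩
  | succ t ih =>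
    intro f hstep h0 ht
    by_cases hv : v ≤ f t
    · obtain ⟨i, hi, hfi⟩ := ih f (fun i hi => hstep i (by omega)) h0 hv
      exact ⟨i, by omega, hfi⟩
    · have := hstep t (by omega)
      exact ⟨t+1, le_refl _, by omega⟩

lemma no_valley (n m s' : ℕ) (qv rv : ℕ → ℕ)
    (hq : ∀ i j, 1 ≤ i → i < j → j ≤ s' → qv i < qv j)
    (hr : ∀ i j, 1 ≤ i → i < j → j ≤ s' → rv j < rv i)
    (hqn : qv s' ≤ n) (hrm : rv 1 ≤ m)
    (hconn : ∀ l, l ≤ (Finset.Icc 1 s').sup (fun k => qv k + rv k) →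
      StronglyConnected (skelFacets n m s' qv rv l))
    (a b c : ℕ) (ha : 1 ≤ a) (hab : a < b) (hbc : b < c) (hcs : c ≤ s')
    (hva : qv b + rv b < qv a + rv a) (hvc : qv b + rv b < qv c + rv c) : False := by
  set l := qv b + rv b + 1 with hl
  have qmono : ∀ i j, 1 ≤ i → i ≤ j → j ≤ s' → qv i ≤ qv j := by
    intro i j h1 hij hj
    rcases eq_or_lt_of_le hij with h | h
    · exact h ▸ le_refl _
    · exact (hq i j h1 h hj).le
  have rmono : ∀ i j, 1 ≤ i → i ≤ j → j ≤ s' → rv j ≤ rv i := by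
    intro i j h1 hij hj
    rcases eq_or_lt_of_le hij with h | h
    · exact h ▸ le_refl _
    · exact (hr i j h1 h hj).le
  have hlsup : l ≤ (Finset.Icc 1 s').sup (fun k => qv k + rv k) := by
    have : qv a + rv a ≤ (Finset.Icc 1 s').sup (fun k => qv k + rv k) :=
      Finset.le_sup (f := fun k => qv k + rv k) (Finset.mem_Icc.mpr ⟨ha, le_trans hab.le (le_trans hbc.le hcs)⟩)
    omega
  have SC := hconn l hlsup
  -- construct F
  set p := min (qv a) l with hp
  have hpl : p ≤ l := min_le_right _ _
  have hpn : p ≤ n := by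
    have h1 : qv a ≤ qv s' := qmono a s' ha (by omega) (le_refl _)
    have h2 : p ≤ qv a := min_le_left _ _
    omega
  obtain ⟨A, hAu, hA⟩ := Finset.exists_subset_card_eq
    (show p ≤ (Finset.univ : Finset (Fin n)).card by
      rw [Finset.card_univ, Fintype.card_fin]; exact hpn)
  obtain ⟨B, hBu, hB⟩ := Finset.exists_subset_card_eq
    (show l - p ≤ (Finset.univ : Finset (Fin m)).card by
      rw [Finset.card_univ, Fintype.card_fin]
      have h1 : l - p ≤ rv a := by omega
      have h2 : rv a ≤ rv 1 := rmono 1 a (le_refl _) ha (by omega)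
      omega)
  have hFface : A.disjSum B ∈ skelFacets n m s' qv rv l := by
    refine ⟨⟨a, ha, by omega, ?_, ?_⟩, ?_⟩
    · rw [xcard_disjSum, hA]; exact min_le_left _ _
    · rw [ycard_disjSum, hB]; omega
    · rw [Finset.card_disjSum, hA, hB]; omega
  -- construct G
  have hrc : rv c + 1 ≤ rv b := hr b c (by omega) hbc hcs
  set p' := l - rv c with hp'
  have hp'b : qv b + 2 ≤ p' := by omega
  have hp'c : p' ≤ qv c := by omega
  obtain ⟨A', hA'u, hA'⟩ := Finset.exists_subset_card_eq
    (show p' ≤ (Finset.univ : Finset (Fin n)).card by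
      rw [Finset.card_univ, Fintype.card_fin]
      exact le_trans hp'c (le_trans (qmono c s' (by omega) hcs (le_refl _)) hqn))
  obtain ⟨B', hB'u, hB'⟩ := Finset.exists_subset_card_eq
    (show rv c ≤ (Finset.univ : Finset (Fin m)).card by
      rw [Finset.card_univ, Fintype.card_fin]
      exact le_trans (rmono 1 c (le_refl _) (by omega) hcs) hrm)
  have hGface : A'.disjSum B' ∈ skelFacets n m s' qv rv l := by
    refine ⟨⟨c, by omega, hcs, ?_, ?_⟩, ?_⟩
    · rw [xcard_disjSum, hA']; exact hp'c
    · rw [ycard_disjSum, hB']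
    · rw [Finset.card_disjSum, hA', hB']; omega
  obtain ⟨t, ch, h0, ht, hmem, hstep⟩ := SC _ hFface _ hGface
  obtain ⟨i, hit, hfi⟩ := nat_ivt (qv b) t (fun i => xcard (ch i))
    (fun i hi => xcard_step (hmem i hi.le).2 (hmem (i+1) hi).2 (hstep i hi))
    (by show xcard (ch 0) ≤ qv b
        rw [h0, xcard_disjSum, hA]
        exact le_trans (min_le_left _ _) (qmono a b ha hab.le (by omega)))
    (by show qv b ≤ xcard (ch t)
        rw [ht, xcard_disjSum, hA']; omega)
  have hfi' : xcard (ch i) = qv b := hfi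
  obtain ⟨⟨k, hk1, hks, hxk, hyk⟩, hcard⟩ := hmem i hit
  rw [hfi'] at hxk
  have hy : ycard (ch i) = rv b + 1 := by
    have := xcard_add_ycard (ch i)
    omega
  rw [hy] at hyk
  rcases lt_trichotomy k b with h | h | h
  · exact absurd hxk (not_le.mpr (hq k b hk1 h (by omega)))
  · subst h; omega
  · exact absurd hyk (not_le.mpr (by have := hr b k (by omega) h hks; omega))

/-- (Lemma 4.5(2).)  If `Δ^{[l-1]}` is strongly connected for every
`0 ≤ l ≤ dim Δ + 1` (note `dim Δ + 1 = max_k (q(k) + r(k))`), then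
`σ(i) = q(i) + r(i)` is unimodal. -/
theorem unimodal_of_skeleta_stronglyConnected (n m s' : ℕ) (hs' : 1 ≤ s')
    (qv rv : ℕ → ℕ)
    (hq : ∀ i j, 1 ≤ i → i < j → j ≤ s' → qv i < qv j)
    (hr : ∀ i j, 1 ≤ i → i < j → j ≤ s' → rv j < rv i)
    (hqn : qv s' ≤ n) (hrm : rv 1 ≤ m)
    (hconn : ∀ l, l ≤ (Finset.Icc 1 s').sup (fun k => qv k + rv k) →
      StronglyConnected (skelFacets n m s' qv rv l)) :
    ∃ k, 1 ≤ k ∧ k ≤ s' ∧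
      (∀ i j, 1 ≤ i → i ≤ j → j ≤ k → qv i + rv i ≤ qv j + rv j) ∧
      (∀ i j, k ≤ i → i ≤ j → j ≤ s' → qv j + rv j ≤ qv i + rv i) := by
  set sg := fun i => qv i + rv i with hsg
  have hnv : ∀ a b c, 1 ≤ a → a < b → b < c → c ≤ s' →
      sg b < sg a → sg b < sg c → False :=
    fun a b c h1 h2 h3 h4 h5 h6 =>
      no_valley n m s' qv rv hq hr hqn hrm hconn a b c h1 h2 h3 h4 h5 h6
  -- pick the largest maximizer
  have hTne : ∃ i ∈ Finset.Icc 1 s', ∀ j ∈ Finset.Icc 1 s', sg j ≤ sg i := by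
    obtain ⟨i, hi, hmax⟩ := Finset.exists_max_image (Finset.Icc 1 s') sg
      ⟨1, Finset.mem_Icc.mpr ⟨le_refl _, hs'⟩⟩
    exact ⟨i, hi, hmax⟩
  set T := @Finset.filter _ (fun i => ∀ j ∈ Finset.Icc 1 s', sg j ≤ sg i)
    (fun _ => Finset.decidableDforallFinset) (Finset.Icc 1 s') with hT
  have hTne' : T.Nonempty := by
    obtain ⟨i, hi, hmax⟩ := hTne
    exact ⟨i, Finset.mem_filter.mpr ⟨hi, hmax⟩⟩
  set k := T.max' hTne' with hk
  have hkT : k ∈ T := T.max'_mem hTne'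
  have hkIcc := (Finset.mem_filter.mp hkT).1
  have hkmax : ∀ j ∈ Finset.Icc 1 s', sg j ≤ sg k := (Finset.mem_filter.mp hkT).2
  have hk1 : 1 ≤ k := (Finset.mem_Icc.mp hkIcc).1
  have hks : k ≤ s' := (Finset.mem_Icc.mp hkIcc).2
  -- ascending up to k, adjacent version
  have hadj1 : ∀ i, 1 ≤ i → i + 1 ≤ k → sg i ≤ sg (i + 1) := by
    intro i h1 h2
    by_contra hcon
    push_neg at hcon
    have hik : sg i ≤ sg k := hkmax i (Finset.mem_Icc.mpr ⟨h1, by omega⟩)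
    have : i + 1 < k := by
      rcases eq_or_lt_of_le h2 with h | h
      · exfalso; rw [h] at hcon; omega
      · exact h
    exact hnv i (i + 1) k h1 (by omega) this hks hcon (by omega)
  -- descending after k, adjacent version
  have hadj2 : ∀ i, k ≤ i → i + 1 ≤ s' → sg (i + 1) ≤ sg i := by
    intro i h1 h2
    by_contra hcon
    push_neg at hcon
    have hik : sg (i + 1) ≤ sg k := hkmax (i + 1) (Finset.mem_Icc.mpr ⟨by omega, h2⟩)
    rcases eq_or_lt_of_le hik with heq | hlt
    · -- then i+1 is also a maximizer, contradicting maximality of k in T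
      have hmem : i + 1 ∈ T := Finset.mem_filter.mpr
        ⟨Finset.mem_Icc.mpr ⟨by omega, h2⟩, fun j hj => heq ▸ hkmax j hj⟩
      have := T.le_max' (i + 1) hmem
      omega
    · have hki : k < i := by
        rcases eq_or_lt_of_le h1 with h | h
        · exfalso; rw [h] at hlt; omega
        · exact h
      exact hnv k i (i + 1) hk1 hki (by omega) h2 (by omega) hcon
  refine ⟨k, hk1, hks, ?_, ?_⟩
  · intro i j h1 hij hjk
    induction j, hij using Nat.le_induction with
    | base => exact le_refl _
    | succ j hj ih =>
      exact le_trans (ih (by omega)) (hadj1 j (by omega) hjk)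
  · intro i j h1 hij hjs
    induction j, hij using Nat.le_induction with
    | base => exact le_refl _
    | succ j hj ih =>
      exact le_trans (hadj2 j (by omega) hjs) (ih (by omega))
end
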